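/- arXiv:2009.13489 — 3 statements merged into one kernel-verified Lean document; each statement's English description precedes it below -/
import Mathlib

section
/- Let X be a graph (1-dimensional CW complex) and p ≥ 2 an integer. Then every cellular 1-cycle α with coefficients in Z/pZ has a preimage 1-cycle α̃ with integer coefficients such that the mass of α̃ is at most p times the mass of α, where the mass of an integral chain is the sum of absolute values of its coefficients and the mass of a mod-p chain is the number of edges in its support. -/
/-!
Lift `α` to an integral chain `β`. Since `α` is a cycle, `∂β` is divisible by `p`, so `β / p` is a
rational chain with integral boundary. Such a chain can be rounded coefficientwise (to `⌊·⌋` or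
`⌈·⌉`) to an integral chain `y` with the same boundary: the edges carrying non-integral
coefficients support a cycle with coefficients in `ℚ / ℤ`, so each of their endpoints meets them
at least twice, there are at least as many of them as endpoints, and hence they support a nonzero
rational cycle; moving along it until one more coefficient becomes integral and inducting does the rounding.
Then `β - p • y` is an integral cycle lifting `α` with coefficients of absolute value `< p`,
vanishing wherever `α` does.
-/

/-- The boundary of a cellular 1-chain on the graph with edge-endpoint maps `s`, `t`. -/
noncomputable def graphBoundary {V E : Type} (s t : E → V) {R : Type} [AddCommGroup R]
    (β : E →₀ R) : V →₀ R :=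
  β.sum fun e r => Finsupp.single (t e) r - Finsupp.single (s e) r

/-- The mass of an integral chain: the sum of the absolute values of its coefficients. -/
def intMass {E : Type} (β : E →₀ ℤ) : ℤ := ∑ e ∈ β.support, |β e|

open Finset

section GraphChains

variable {V E : Type} (s t : E → V)

noncomputable def graphBoundaryHom (R : Type) [AddCommGroup R] : (E →₀ R) →+ (V →₀ R) :=
  Finsupp.liftAddHom fun e => Finsupp.singleAddHom (t e) - Finsupp.singleAddHom (s e)

theorem coe_graphBoundaryHom (R : Type) [AddCommGroup R] :
    ⇑(graphBoundaryHom s t R) = graphBoundary s t := rfl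

theorem graphBoundary_single {R : Type} [AddCommGroup R] (e : E) (r : R) :
    graphBoundary s t (Finsupp.single e r) = Finsupp.single (t e) r - Finsupp.single (s e) r := by
  simp [graphBoundary]

theorem graphBoundary_apply [DecidableEq V] {R : Type} [AddCommGroup R] (β : E →₀ R) (v : V) :
    graphBoundary s t β v =
      ∑ e ∈ β.support with t e = v, β e - ∑ e ∈ β.support with s e = v, β e := by
  simp [graphBoundary, Finsupp.sum, Finsupp.single_apply, sum_filter,
    sum_sub_distrib]

theorem graphBoundary_mapRange {R R' : Type} [AddCommGroup R] [AddCommGroup R'] (f : R →+ R')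
    (β : E →₀ R) :
    graphBoundary s t (β.mapRange f f.map_zero) = (graphBoundary s t β).mapRange f f.map_zero := by
  induction β using Finsupp.induction_linear with
  | zero => simp [graphBoundary]
  | add β γ hβ hγ =>
    simp only [Finsupp.mapRange_add f.map_add, ← coe_graphBoundaryHom, map_add] at hβ hγ ⊢
    rw [hβ, hγ]
  | single e r => simp [graphBoundary_single, Finsupp.mapRange_sub]

theorem graphBoundary_sum_eq_zero {R : Type} [AddCommGroup R] (β : E →₀ R) :
    (graphBoundary s t β).sum (fun _ r => r) = 0 := by
  induction β using Finsupp.induction_linear with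
  | zero => simp [graphBoundary]
  | add β γ hβ hγ =>
    rw [← coe_graphBoundaryHom, map_add, Finsupp.sum_add_index' (fun _ => rfl) (fun _ _ _ => rfl),
      coe_graphBoundaryHom, hβ, hγ, add_zero]
  | single e r =>
    rw [graphBoundary_single, Finsupp.sum_sub_index (fun _ _ _ => rfl)]
    simp

theorem graphBoundary_eq_zero_of_forall_ne {R : Type} [AddCommGroup R] (β : E →₀ R) (v₀ : V)
    (h : ∀ v ≠ v₀, graphBoundary s t β v = 0) : graphBoundary s t β = 0 := by
  have hv₀ : graphBoundary s t β v₀ = 0 := by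
    rw [← graphBoundary_sum_eq_zero s t β,
      Finsupp.sum_eq_single v₀ (fun v _ hv => h v hv) (fun _ => rfl)]
  ext v
  by_cases hv : v = v₀
  · rw [hv, hv₀, Finsupp.zero_apply]
  · exact h v hv

def edgeEndpoints [DecidableEq V] (F : Finset E) : Finset V := F.image s ∪ F.image t

theorem edgeEndpoints_mono [DecidableEq V] {F F' : Finset E} (h : F ⊆ F') :
    edgeEndpoints s t F ⊆ edgeEndpoints s t F' :=
  union_subset_union (image_subset_image h) (image_subset_image h)

theorem support_graphBoundary_subset [DecidableEq V] {R : Type} [AddCommGroup R] (β : E →₀ R) :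
    (graphBoundary s t β).support ⊆ edgeEndpoints s t β.support := by
  intro v hv
  contrapose! hv
  simp only [edgeEndpoints, mem_union, mem_image, not_or, not_exists, not_and] at hv
  rw [Finsupp.notMem_support_iff, graphBoundary_apply, filter_false_of_mem (fun e he => hv.2 e he),
    filter_false_of_mem (fun e he => hv.1 e he), sum_empty, sub_zero]

theorem two_le_card_filter_source_add_card_filter_target [DecidableEq V] {A : Type}
    [AddCommGroup A] {z : E →₀ A} (hz : graphBoundary s t z = 0) {v : V}
    (hv : v ∈ edgeEndpoints s t z.support) :
    2 ≤ #{e ∈ z.support | s e = v} + #{e ∈ z.support | t e = v} := by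
  have hpos : 0 < #{e ∈ z.support | s e = v} + #{e ∈ z.support | t e = v} := by
    simp only [edgeEndpoints, mem_union, mem_image] at hv
    rcases hv with ⟨e, he, hev⟩ | ⟨e, he, hev⟩
    · exact Nat.add_pos_left (card_pos.2 ⟨e, mem_filter.2 ⟨he, hev⟩⟩) _
    · exact Nat.add_pos_right _ (card_pos.2 ⟨e, mem_filter.2 ⟨he, hev⟩⟩)
  by_contra! hlt
  have hzv := DFunLike.congr_fun hz v
  rw [graphBoundary_apply, Finsupp.zero_apply] at hzv
  -- a vertex met by a single edge `e` of the support would have boundary `± z e ≠ 0`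
  obtain ⟨hs, ht⟩ | ⟨hs, ht⟩ : (#{e ∈ z.support | s e = v} = 1 ∧ #{e ∈ z.support | t e = v} = 0) ∨
      (#{e ∈ z.support | s e = v} = 0 ∧ #{e ∈ z.support | t e = v} = 1) := by omega
  · obtain ⟨e, he⟩ := card_eq_one.1 hs
    rw [card_eq_zero.1 ht, he, sum_empty, sum_singleton, zero_sub, neg_eq_zero] at hzv
    exact Finsupp.mem_support_iff.1 (mem_filter.1 (he ▸ mem_singleton_self e)).1 hzv
  · obtain ⟨e, he⟩ := card_eq_one.1 ht
    rw [card_eq_zero.1 hs, he, sum_empty, sum_singleton, sub_zero] at hzv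
    exact Finsupp.mem_support_iff.1 (mem_filter.1 (he ▸ mem_singleton_self e)).1 hzv

theorem card_edgeEndpoints_support_le [DecidableEq V] {A : Type} [AddCommGroup A]
    {z : E →₀ A} (hz : graphBoundary s t z = 0) :
    #(edgeEndpoints s t z.support) ≤ #z.support := by
  set F := z.support
  have hs : #F = ∑ v ∈ edgeEndpoints s t F, #{e ∈ F | s e = v} :=
    card_eq_sum_card_fiberwise fun e he => mem_union_left _ (mem_image_of_mem s he)
  have ht : #F = ∑ v ∈ edgeEndpoints s t F, #{e ∈ F | t e = v} :=
    card_eq_sum_card_fiberwise fun e he => mem_union_right _ (mem_image_of_mem t he)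
  have : 2 * #(edgeEndpoints s t F) ≤ 2 * #F := calc
    2 * #(edgeEndpoints s t F) = ∑ _v ∈ edgeEndpoints s t F, 2 := by
      rw [sum_const, smul_eq_mul, mul_comm]
    _ ≤ ∑ v ∈ edgeEndpoints s t F, (#{e ∈ F | s e = v} + #{e ∈ F | t e = v}) :=
      sum_le_sum fun v hv => two_le_card_filter_source_add_card_filter_target s t hz hv
    _ = 2 * #F := by rw [sum_add_distrib, ← hs, ← ht, two_mul]
  omega

theorem exists_ratCycle_ne_zero_support_subset {A : Type} [AddCommGroup A] {z : E →₀ A}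
    (hz : graphBoundary s t z = 0) (hz₀ : z ≠ 0) :
    ∃ ρ : E →₀ ℚ, ρ ≠ 0 ∧ ρ.support ⊆ z.support ∧ graphBoundary s t ρ = 0 := by
  classical
  set F := z.support
  obtain ⟨e₀, he₀⟩ := Finsupp.support_nonempty_iff.2 hz₀
  have hv₀ : s e₀ ∈ edgeEndpoints s t F := mem_union_left _ (mem_image_of_mem s he₀)
  -- the boundary is determined by its values off one vertex, and there are fewer of those
  -- than edges in `F`
  let W := ↥((edgeEndpoints s t F).erase (s e₀))
  let Φ : Finsupp.supported ℚ ℚ (F : Set E) →ₗ[ℚ] (W → ℚ) :=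
    LinearMap.pi (fun v : W => Finsupp.lapply v.1) ∘ₗ (graphBoundaryHom s t ℚ).toRatLinearMap ∘ₗ
      (Finsupp.supported ℚ ℚ (F : Set E)).subtype
  have := Module.Finite.equiv (Finsupp.supportedEquivFinsupp (M := ℚ) (R := ℚ) (F : Set E)).symm
  have hdim :
      Module.finrank ℚ (W → ℚ) < Module.finrank ℚ (Finsupp.supported ℚ ℚ (F : Set E)) := by
    rw [Module.finrank_fintype_fun_eq_card, Fintype.card_coe, card_erase_of_mem hv₀,
      (Finsupp.supportedEquivFinsupp _).finrank_eq, Module.finrank_finsupp_self]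
    simp only [coe_sort_coe, Fintype.card_coe]
    have : #(edgeEndpoints s t F) ≤ #F := card_edgeEndpoints_support_le s t hz
    have : 0 < #(edgeEndpoints s t F) := card_pos.2 ⟨_, hv₀⟩
    omega
  obtain ⟨ρ, hρΦ, hρ₀⟩ :=
    Submodule.exists_mem_ne_zero_of_ne_bot (LinearMap.ker_ne_bot_of_finrank_lt hdim)
  have hρF : (ρ : E →₀ ℚ).support ⊆ F := (Finsupp.mem_supported _ _).1 ρ.2
  refine ⟨ρ, by simpa using hρ₀, hρF,
    graphBoundary_eq_zero_of_forall_ne s t _ (s e₀) fun v hv => ?_⟩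
  by_cases hvF : v ∈ edgeEndpoints s t F
  · have hΦ : Φ ρ = 0 := LinearMap.mem_ker.1 hρΦ
    exact congrFun hΦ ⟨v, mem_erase.2 ⟨hv, hvF⟩⟩
  · exact Finsupp.notMem_support_iff.1 fun h =>
      hvF (edgeEndpoints_mono s t hρF (support_graphBoundary_subset s t _ h))

theorem floor_lt_of_notMem_range {a : ℚ} (ha : a ∉ (Int.castAddHom ℚ).range) : (⌊a⌋ : ℚ) < a :=
  (Int.floor_le a).lt_of_ne fun h => ha ⟨_, h⟩

theorem lt_ceil_of_notMem_range {a : ℚ} (ha : a ∉ (Int.castAddHom ℚ).range) : a < ⌈a⌉ :=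
  (Int.le_ceil a).lt_of_ne' fun h => ha ⟨_, h⟩

/-- The `c` at which `a + c * r` reaches `⌈a⌉` (if `r > 0`) or `⌊a⌋` (if `r < 0`). -/
noncomputable def roundingSlack (a r : ℚ) : ℚ := ((if 0 < r then ⌈a⌉ else ⌊a⌋ : ℤ) - a) / r

theorem roundingSlack_pos {a r : ℚ} (ha : a ∉ (Int.castAddHom ℚ).range) (hr : r ≠ 0) :
    0 < roundingSlack a r := by
  unfold roundingSlack
  rcases hr.lt_or_gt with hr | hr
  · rw [if_neg hr.not_gt]
    exact div_pos_of_neg_of_neg (sub_neg.2 (floor_lt_of_notMem_range ha)) hr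
  · rw [if_pos hr]
    exact div_pos (sub_pos.2 (lt_ceil_of_notMem_range ha)) hr

theorem add_mul_mem_Icc_floor_ceil {a r c : ℚ} (hc : 0 ≤ c) (hcr : c ≤ roundingSlack a r) :
    a + c * r ∈ Set.Icc (⌊a⌋ : ℚ) ⌈a⌉ := by
  unfold roundingSlack at hcr
  rcases lt_trichotomy r 0 with hr | rfl | hr
  · rw [if_neg hr.not_gt, le_div_iff_of_neg hr] at hcr
    exact ⟨by linarith, by linarith [Int.le_ceil a, mul_nonpos_of_nonneg_of_nonpos hc hr.le]⟩
  · simp [Int.floor_le, Int.le_ceil]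
  · rw [if_pos hr, le_div_iff₀ hr] at hcr
    exact ⟨by linarith [Int.floor_le a, mul_nonneg hc hr.le], by linarith⟩

theorem add_roundingSlack_mul_mem_range (a : ℚ) {r : ℚ} (hr : r ≠ 0) :
    a + roundingSlack a r * r ∈ (Int.castAddHom ℚ).range :=
  ⟨if 0 < r then ⌈a⌉ else ⌊a⌋, by simp [roundingSlack, div_mul_cancel₀ _ hr]⟩

noncomputable def modIntChain (x : E →₀ ℚ) : E →₀ ℚ ⧸ (Int.castAddHom ℚ).range :=
  x.mapRange (QuotientAddGroup.mk' _) (map_zero _)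

theorem modIntChain_apply_eq_zero {x : E →₀ ℚ} {e : E} :
    modIntChain x e = 0 ↔ x e ∈ (Int.castAddHom ℚ).range :=
  QuotientAddGroup.eq_zero_iff _

theorem mem_support_modIntChain {x : E →₀ ℚ} {e : E} :
    e ∈ (modIntChain x).support ↔ x e ∉ (Int.castAddHom ℚ).range :=
  Finsupp.mem_support_iff.trans (not_congr modIntChain_apply_eq_zero)

theorem graphBoundary_modIntChain {x : E →₀ ℚ}
    (hx : ∀ v, graphBoundary s t x v ∈ (Int.castAddHom ℚ).range) :
    graphBoundary s t (modIntChain x) = 0 := by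
  ext v
  rw [modIntChain, graphBoundary_mapRange, Finsupp.mapRange_apply, Finsupp.zero_apply]
  exact (QuotientAddGroup.eq_zero_iff _).2 (hx v)

theorem exists_rounding_step (x : E →₀ ℚ)
    (hx : ∀ v, graphBoundary s t x v ∈ (Int.castAddHom ℚ).range) (hx₀ : modIntChain x ≠ 0) :
    ∃ x' : E →₀ ℚ, graphBoundary s t x' = graphBoundary s t x ∧
      (∀ e, x' e ∈ Set.Icc (⌊x e⌋ : ℚ) ⌈x e⌉) ∧
      #(modIntChain x').support < #(modIntChain x).support := by
  classical
  obtain ⟨ρ, hρ₀, hρx, hρ⟩ :=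
    exists_ratCycle_ne_zero_support_subset s t (graphBoundary_modIntChain s t hx) hx₀
  obtain ⟨e₁, he₁, hmin⟩ := ρ.support.exists_min_image (fun e => roundingSlack (x e) (ρ e))
    (Finsupp.support_nonempty_iff.2 hρ₀)
  have hslack : ∀ e ∈ ρ.support, 0 < roundingSlack (x e) (ρ e) := fun e he =>
    roundingSlack_pos (mem_support_modIntChain.1 (hρx he)) (Finsupp.mem_support_iff.1 he)
  set c := roundingSlack (x e₁) (ρ e₁)
  have hx'ρ : ∀ e ∉ ρ.support, (x + c • ρ) e = x e := fun e he => by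
    simp [Finsupp.notMem_support_iff.1 he]
  refine ⟨x + c • ρ, ?_, fun e => ?_, card_lt_card ?_⟩
  · rw [← coe_graphBoundaryHom, map_add, map_rat_smul, coe_graphBoundaryHom, hρ, smul_zero,
      add_zero]
  · by_cases he : e ∈ ρ.support
    · simpa using add_mul_mem_Icc_floor_ceil (hslack e₁ he₁).le (hmin e he)
    · rw [hx'ρ e he]
      exact ⟨Int.floor_le _, Int.le_ceil _⟩
  · have hsub : (modIntChain (x + c • ρ)).support ⊆ (modIntChain x).support := fun e he => by
      by_contra h
      rw [mem_support_modIntChain, hx'ρ e fun h' => h (hρx h')] at he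
      exact he (not_not.1 (mt mem_support_modIntChain.2 h))
    refine (ssubset_iff_of_subset hsub).2 ⟨e₁, hρx he₁, ?_⟩
    rw [mem_support_modIntChain, not_not]
    simpa using add_roundingSlack_mul_mem_range (x e₁) (Finsupp.mem_support_iff.1 he₁)

theorem exists_rounding_graphBoundary_eq (x : E →₀ ℚ)
    (hx : ∀ v, graphBoundary s t x v ∈ (Int.castAddHom ℚ).range) :
    ∃ y : E →₀ ℤ, graphBoundary s t (y.mapRange Int.cast Int.cast_zero) = graphBoundary s t x ∧
      ∀ e, ⌊x e⌋ ≤ y e ∧ y e ≤ ⌈x e⌉ := by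
  induction hn : #(modIntChain x).support using Nat.strong_induction_on generalizing x with
  | _ n ih =>
  by_cases hx₀ : modIntChain x = 0
  · refine ⟨x.mapRange Int.floor Int.floor_zero, congrArg _ ?_,
      fun e => ⟨le_rfl, Int.floor_le_ceil _⟩⟩
    ext e
    obtain ⟨k, hk⟩ := modIntChain_apply_eq_zero.1 (DFunLike.congr_fun hx₀ e)
    simp [← hk]
  · obtain ⟨x', hx'x, hIcc, hlt⟩ := exists_rounding_step s t x hx hx₀
    obtain ⟨y, hy, hyx'⟩ := ih _ (hn ▸ hlt) x' (hx'x ▸ hx) rfl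
    exact ⟨y, hy.trans hx'x, fun e =>
      ⟨(Int.le_floor.2 (hIcc e).1).trans (hyx' e).1, (hyx' e).2.trans (Int.ceil_le.2 (hIcc e).2)⟩⟩

theorem exists_graphBoundary_sub_nsmul_eq_zero {p : ℕ} (hp : 0 < p) (β : E →₀ ℤ)
    (hβ : ∀ v, (p : ℤ) ∣ graphBoundary s t β v) :
    ∃ y : E →₀ ℤ, graphBoundary s t (β - p • y) = 0 ∧ ∀ e, |β e - p * y e| < p := by
  have hp' : (p : ℚ) ≠ 0 := by positivity
  have hcast : ∀ γ : E →₀ ℤ, graphBoundary s t (γ.mapRange Int.cast Int.cast_zero) =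
      (graphBoundary s t γ).mapRange (Int.cast : ℤ → ℚ) Int.cast_zero :=
    graphBoundary_mapRange s t (Int.castAddHom ℚ)
  set x : E →₀ ℚ := (p : ℚ)⁻¹ • β.mapRange Int.cast Int.cast_zero
  have hβx :
      graphBoundary s t (β.mapRange Int.cast Int.cast_zero) = (p : ℚ) • graphBoundary s t x := by
    rw [← coe_graphBoundaryHom, map_rat_smul, smul_inv_smul₀ hp']
  have hx : ∀ v, graphBoundary s t x v ∈ (Int.castAddHom ℚ).range := fun v => by
    obtain ⟨k, hk⟩ := hβ v
    refine ⟨k, ?_⟩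
    rw [← coe_graphBoundaryHom, map_rat_smul, coe_graphBoundaryHom, hcast]
    simp [hk, hp']
  obtain ⟨y, hy, hyx⟩ := exists_rounding_graphBoundary_eq s t x hx
  refine ⟨y, ?_, fun e => ?_⟩
  · have hsub : (β - p • y).mapRange (Int.cast : ℤ → ℚ) Int.cast_zero =
        β.mapRange Int.cast Int.cast_zero - (p : ℚ) • y.mapRange Int.cast Int.cast_zero := by
      ext; simp
    have : (graphBoundary s t (β - p • y)).mapRange (Int.cast : ℤ → ℚ) Int.cast_zero = 0 := by
      rw [← hcast, hsub, ← coe_graphBoundaryHom, map_sub, map_rat_smul, coe_graphBoundaryHom, hy,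
        hβx, sub_self]
    exact Finsupp.mapRange_injective _ Int.cast_zero Int.cast_injective
      (this.trans Finsupp.mapRange_zero.symm)
  · have hyx_lt : |(y e : ℚ) - x e| < 1 := abs_sub_lt_iff.2
      ⟨by linarith [(Int.cast_le (R := ℚ)).2 (hyx e).2, Int.ceil_lt_add_one (x e)],
        by linarith [(Int.cast_le (R := ℚ)).2 (hyx e).1, Int.sub_one_lt_floor (x e)]⟩
    have : ((β e - p * y e : ℤ) : ℚ) = -(p * ((y e : ℚ) - x e)) := by
      simp only [Int.cast_sub, Int.cast_mul, Int.cast_natCast, Finsupp.coe_smul, Pi.smul_apply,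
        Finsupp.mapRange_apply, smul_eq_mul, x]
      field_simp
      ring
    rw [← Int.cast_lt (R := ℚ), Int.cast_abs, this, abs_neg, abs_mul, Nat.abs_cast]
    push_cast
    exact mul_lt_of_lt_one_right (by positivity) hyx_lt

theorem intMass_le_mul_card {γ : E →₀ ℤ} {S : Finset E} {c : ℤ} (hS : γ.support ⊆ S)
    (hc : ∀ e, |γ e| ≤ c) : intMass γ ≤ c * #S := calc
  intMass γ ≤ ∑ e ∈ S, |γ e| := sum_le_sum_of_subset_of_nonneg hS fun _ _ _ => abs_nonneg _
  _ ≤ ∑ _e ∈ S, c := sum_le_sum fun e _ => hc e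
  _ = c * #S := by rw [sum_const, nsmul_eq_mul, mul_comm]

end GraphChains

/-- If `X` is a graph and `p ≥ 2`, then every cellular 1-cycle `α` with
coefficients in `ℤ/pℤ` has a preimage integral 1-cycle `α̃` with
`Mass(α̃) ≤ p · Mass(α)`, where the mass of a mod-`p` chain is the size of its support. -/
theorem mod_p_cycle_has_small_integral_lift
    (V E : Type) (s t : E → V) (p : ℕ) (hp : 2 ≤ p)
    (α : E →₀ ZMod p) (hα : graphBoundary s t α = 0) :
    ∃ αlift : E →₀ ℤ,
      Finsupp.mapRange (Int.cast : ℤ → ZMod p) (by simp) αlift = α ∧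
      graphBoundary s t αlift = 0 ∧
      intMass αlift ≤ (p : ℤ) * α.support.card := by
  set β : E →₀ ℤ := α.mapRange ZMod.cast ZMod.cast_zero
  have hβα : β.mapRange (Int.cast : ℤ → ZMod p) Int.cast_zero = α := by
    ext e
    simp [β]
  have hdvd : ∀ v, (p : ℤ) ∣ graphBoundary s t β v := fun v => by
    rw [← ZMod.intCast_zmod_eq_zero_iff_dvd]
    have := graphBoundary_mapRange s t (Int.castAddHom (ZMod p)) β
    simpa [hβα, hα] using (DFunLike.congr_fun this v).symm
  obtain ⟨y, hy, hyβ⟩ := exists_graphBoundary_sub_nsmul_eq_zero s t (by omega) β hdvd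
  refine ⟨β - p • y, ?_, hy, intMass_le_mul_card (fun e he => ?_) fun e => ?_⟩
  · ext e
    simp [← hβα]
  · by_contra hαe
    have hβe : β e = 0 := by simp [β, Finsupp.notMem_support_iff.1 hαe]
    have hye : y e = 0 := by
      have h := hyβ e
      rw [hβe, zero_sub, abs_neg, abs_mul, Nat.abs_cast] at h
      exact Int.abs_lt_one_iff.1
        (lt_of_mul_lt_mul_left (h.trans_eq (mul_one _).symm) p.cast_nonneg)
    exact Finsupp.mem_support_iff.1 he (by simp [hβe, hye])
  · simpa using (hyβ e).le
end

section
/- Suppose G is a group, h : G → Z a surjective homomorphism with kernel H, and h' : G × F₂(u,v) → Z the homomorphism agreeing with h on G and sending both free generators u, v to 1. Then the kernel of h' is isomorphic to the amalgamated free product G *_H G (two copies of G amalgamated along H via the identity). -/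
/-!
Let `P` be the amalgam of copies of `G` along `H = ker h`, one copy for each free generator
`u_i`, and pick `g₀` with `h g₀ = 1`. Conjugation by `g₀` in every copy is an automorphism of
`P`, and `P ⋊ ℤ ≅ G × F`: the copy `i` of `g` goes to `(g, u_i ^ (-h g))` and the generator `t`
of `ℤ` to `(g₀, 1)`. The inverse sends `u_i` to `(g₀⁻¹)_i t` and `g` to `g_i ((g₀⁻¹)_i t) ^ h g`,
which does not depend on `i` because these homomorphisms agree on `H` and at `g₀`. The
isomorphism carries `h'` to the projection onto `ℤ`, whose kernel is `P`.
-/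

open Monoid SemidirectProduct Multiplicative

theorem FreeGroup.commute_lift {α M : Type*} [Group M] {f : α → M} {x : M}
    (hx : ∀ a, Commute x (f a)) (w : FreeGroup α) : Commute x (lift f w) := by
  induction w using FreeGroup.induction_on with
  | C1 => simp
  | of a => simpa using hx a
  | inv_of a ha => simpa using ha.inv_right
  | mul v w hv hw => simpa using hv.mul_right hw

theorem MonoidHom.eq_of_eqOn_ker_of_map_eq {G M : Type*} [Group G] [Group M]
    (h : G →* Multiplicative ℤ) {g₀ : G} (hg₀ : h g₀ = ofAdd 1) {f f' : G →* M}
    (hker : ∀ k ∈ h.ker, f k = f' k) (h₀ : f g₀ = f' g₀) : f = f' := by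
  ext g
  have hk : g * g₀ ^ (-(h g).toAdd) ∈ h.ker := by
    simp [hg₀, ← ofAdd_zsmul]
  have hg : g = g * g₀ ^ (-(h g).toAdd) * g₀ ^ (h g).toAdd := by group
  rw [hg, map_mul f, map_mul f', hker _ hk, map_zpow, map_zpow, h₀]

noncomputable def SemidirectProduct.kerEquivOfMulEquiv {N K M : Type*} [Group N] [Group K]
    [Group M] {φ : K →* MulAut N} (e : N ⋊[φ] K ≃* M) (q : M →* K)
    (hq : q.comp e.toMonoidHom = rightHom) : q.ker ≃* N :=
  have hker : q.ker = (inl : N →* N ⋊[φ] K).range.map e.toMonoidHom := by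
    rw [range_inl_eq_ker_rightHom, ← hq, ← MonoidHom.comap_ker,
      Subgroup.map_comap_eq_self_of_surjective e.surjective]
  (MulEquiv.subgroupCongr hker).trans
    ((e.subgroupMap _).symm.trans (MonoidHom.ofInjective inl_injective).symm)

abbrev Amalgam {G : Type*} [Group G] (ι : Type*) (N : Subgroup G) : Type _ :=
  PushoutI fun _ : ι => N.subtype

namespace Amalgam

section Conj

variable {G : Type*} [Group G] {ι : Type*} (N : Subgroup G) [N.Normal]

def conjEnd (g : G) : Amalgam ι N →* Amalgam ι N :=
  PushoutI.lift (fun i => (PushoutI.of i).comp (MulAut.conj g).toMonoidHom)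
    ((PushoutI.base _).comp (MulAut.conjNormal g).toMonoidHom)
    fun i => by ext k; simp [← PushoutI.of_apply_eq_base (fun _ : ι => N.subtype) i]

@[simp]
lemma conjEnd_of (g : G) (i : ι) (x : G) :
    conjEnd N g (PushoutI.of i x) = PushoutI.of i (g * x * g⁻¹) := by
  simp [conjEnd]

@[simp]
lemma conjEnd_base (g : G) (k : N) :
    conjEnd N g (PushoutI.base _ k) =
      PushoutI.base (fun _ : ι => N.subtype) (MulAut.conjNormal g k) := by
  simp [conjEnd]

lemma conjEnd_one : conjEnd (ι := ι) N 1 = MonoidHom.id _ := by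
  ext <;> simp

lemma conjEnd_mul (g g' : G) :
    conjEnd (ι := ι) N (g * g') = (conjEnd N g).comp (conjEnd N g') := by
  ext <;> simp [mul_assoc]

def conjAut : G →* MulAut (Amalgam ι N) where
  toFun g := (conjEnd N g).toMulEquiv (conjEnd N g⁻¹)
    (by rw [← conjEnd_mul, inv_mul_cancel, conjEnd_one])
    (by rw [← conjEnd_mul, mul_inv_cancel, conjEnd_one])
  map_one' := MulEquiv.ext fun p => by simp [conjEnd_one]
  map_mul' g g' := MulEquiv.ext fun p => by simp [conjEnd_mul]

@[simp]
lemma conjAut_of (g : G) (i : ι) (x : G) :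
    conjAut N g (PushoutI.of i x) = PushoutI.of i (g * x * g⁻¹) :=
  conjEnd_of N g i x

@[simp]
lemma conjAut_base (g : G) (k : N) :
    conjAut N g (PushoutI.base _ k) =
      PushoutI.base (fun _ : ι => N.subtype) (MulAut.conjNormal g k) :=
  conjEnd_base N g k

end Conj

variable {G : Type*} [Group G] {ι : Type*} (h : G →* Multiplicative ℤ)

def toProd : Amalgam ι h.ker →* G × FreeGroup ι :=
  PushoutI.lift (fun i => (MonoidHom.id G).prod ((zpowersHom _ (FreeGroup.of i)⁻¹).comp h))
    ((MonoidHom.inl G _).comp h.ker.subtype)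
    fun i => by ext k <;> simp [MonoidHom.mem_ker.mp k.2]

@[simp]
lemma toProd_of (i : ι) (g : G) :
    toProd h (PushoutI.of i g) = (g, (FreeGroup.of i)⁻¹ ^ (h g).toAdd) := by
  simp [toProd]

@[simp]
lemma toProd_base (k : h.ker) :
    toProd h (PushoutI.base (fun _ : ι => h.ker.subtype) k) = ((k : G), 1) := by
  simp [toProd]

lemma toProd_conjAut (g : G) (p : Amalgam ι h.ker) :
    toProd h (conjAut h.ker g p) = (g, 1) * toProd h p * (g, 1)⁻¹ := by
  suffices (toProd h).comp (conjAut h.ker g).toMonoidHom =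
      (MulAut.conj ((g, 1) : G × FreeGroup ι)).toMonoidHom.comp (toProd h) from
    DFunLike.congr_fun this p
  ext <;> simp; group

def degree : G × FreeGroup ι →* Multiplicative ℤ :=
  h.comp (MonoidHom.fst G (FreeGroup ι)) *
    (FreeGroup.lift fun _ => ofAdd (1 : ℤ)).comp (MonoidHom.snd G (FreeGroup ι))

variable (g₀ : G)

abbrev Semidirect (ι : Type*) : Type _ :=
  Amalgam ι h.ker ⋊[(conjAut h.ker).comp (zpowersHom G g₀)] Multiplicative ℤ

def fromSemidirect : Semidirect h g₀ ι →* G × FreeGroup ι :=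
  SemidirectProduct.lift (toProd h) ((MonoidHom.inl G _).comp (zpowersHom G g₀))
    fun n => MonoidHom.ext fun p => (toProd_conjAut h _ p).trans (by simp)

def letter (i : ι) : Semidirect h g₀ ι := inl (PushoutI.of i g₀⁻¹) * inr (ofAdd 1)

-- `inr (ofAdd 1)` acts on the copy `i` as conjugation by `g₀`, which `inl (of i g₀⁻¹)` undoes.
lemma commute_inl_of_letter (i : ι) (x : G) :
    Commute (inl (PushoutI.of i x)) (letter h g₀ i) := by
  have key := inl_aut (φ := (conjAut h.ker).comp (zpowersHom G g₀)) (ofAdd 1) (PushoutI.of i x)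
  simp only [MonoidHom.comp_apply, zpowersHom_apply, toAdd_ofAdd, zpow_one, conjAut_of,
    map_mul, map_inv] at key
  have hc := mul_inv_eq_iff_eq_mul.mp key.symm
  rw [Commute, SemiconjBy, letter, map_inv, map_inv, mul_assoc _ _ (inl _), hc]
  group

def sectionAt (i : ι) : G →* Semidirect h g₀ ι :=
  ((inl.comp (PushoutI.of (φ := fun _ : ι => h.ker.subtype) i)).noncommCoprod
    (zpowersHom _ (letter h g₀ i))
    fun x n => (commute_inl_of_letter h g₀ i x).zpow_right n.toAdd).comp
      ((MonoidHom.id G).prod h)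

lemma sectionAt_apply (i : ι) (g : G) :
    sectionAt h g₀ i g = inl (PushoutI.of i g) * letter h g₀ i ^ (h g).toAdd :=
  rfl

variable {g₀}

lemma sectionAt_self (hg₀ : h g₀ = ofAdd 1) (i : ι) : sectionAt h g₀ i g₀ = inr (ofAdd 1) := by
  simp [sectionAt_apply, hg₀, letter, ← mul_assoc]

lemma sectionAt_eq (hg₀ : h g₀ = ofAdd 1) (i j : ι) : sectionAt h g₀ i = sectionAt h g₀ j := by
  refine MonoidHom.eq_of_eqOn_ker_of_map_eq h hg₀ (fun k hk => ?_) ?_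
  · simp only [sectionAt_apply, MonoidHom.mem_ker.mp hk, toAdd_one, zpow_zero, mul_one]
    have base := PushoutI.of_apply_eq_base (fun _ : ι => h.ker.subtype)
    exact congrArg inl ((base i ⟨k, hk⟩).trans (base j ⟨k, hk⟩).symm)
  · rw [sectionAt_self h hg₀, sectionAt_self h hg₀]

lemma commute_sectionAt_letter (hg₀ : h g₀ = ofAdd 1) (i j : ι) (g : G) :
    Commute (sectionAt h g₀ i g) (letter h g₀ j) := by
  rw [sectionAt_eq h hg₀ i j, sectionAt_apply]
  exact (commute_inl_of_letter h g₀ j g).mul_left (Commute.zpow_self _ _)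

@[simp]
lemma fromSemidirect_letter (hg₀ : h g₀ = ofAdd 1) (i : ι) :
    fromSemidirect h g₀ (letter h g₀ i) = (1, FreeGroup.of i) := by
  simp [fromSemidirect, letter, hg₀]

@[simp]
lemma fromSemidirect_sectionAt (hg₀ : h g₀ = ofAdd 1) (i : ι) (g : G) :
    fromSemidirect h g₀ (sectionAt h g₀ i g) = (g, 1) := by
  rw [sectionAt_apply, map_mul, map_zpow, fromSemidirect_letter h hg₀]
  simp [fromSemidirect]

variable [Nonempty ι]

noncomputable def toSemidirect (hg₀ : h g₀ = ofAdd 1) : G × FreeGroup ι →* Semidirect h g₀ ι :=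
  (sectionAt h g₀ (Classical.arbitrary ι)).noncommCoprod (FreeGroup.lift (letter h g₀))
    fun _ _ => FreeGroup.commute_lift (fun _ => commute_sectionAt_letter h hg₀ _ _ _) _

lemma fromSemidirect_comp_toSemidirect (hg₀ : h g₀ = ofAdd 1) :
    (fromSemidirect h g₀).comp (toSemidirect (ι := ι) h hg₀) = MonoidHom.id _ := by
  have hF : (fromSemidirect h g₀).comp (FreeGroup.lift (letter (ι := ι) h g₀)) =
      MonoidHom.inr G _ :=
    FreeGroup.ext_hom _ _ (fromSemidirect_letter h hg₀)
  refine MonoidHom.ext fun ⟨g, w⟩ => ?_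
  simp only [toSemidirect, MonoidHom.comp_apply, MonoidHom.noncommCoprod_apply, map_mul,
    fromSemidirect_sectionAt h hg₀]
  rw [← MonoidHom.comp_apply, hF]
  simp

lemma toSemidirect_comp_fromSemidirect (hg₀ : h g₀ = ofAdd 1) :
    (toSemidirect (ι := ι) h hg₀).comp (fromSemidirect h g₀) = MonoidHom.id _ := by
  refine SemidirectProduct.hom_ext
    (PushoutI.hom_ext_nonempty fun i => MonoidHom.ext fun g => ?_) (MonoidHom.ext_mint ?_)
  · simp [fromSemidirect, toSemidirect, sectionAt_eq h hg₀ _ i, sectionAt_apply]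
  · simp [fromSemidirect, toSemidirect, sectionAt_self h hg₀]

noncomputable def semidirectEquiv (hg₀ : h g₀ = ofAdd 1) :
    Semidirect h g₀ ι ≃* G × FreeGroup ι :=
  (fromSemidirect h g₀).toMulEquiv (toSemidirect h hg₀)
    (toSemidirect_comp_fromSemidirect h hg₀) (fromSemidirect_comp_toSemidirect h hg₀)

lemma degree_comp_fromSemidirect (hg₀ : h g₀ = ofAdd 1) :
    (degree h).comp (fromSemidirect (ι := ι) h g₀) = rightHom := by
  refine SemidirectProduct.hom_ext
    (PushoutI.hom_ext_nonempty fun i => MonoidHom.ext fun g => ?_) (MonoidHom.ext_mint ?_)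
  · simp [degree, fromSemidirect, ← ofAdd_zsmul]
  · simp [degree, fromSemidirect, hg₀]

noncomputable def kerDegreeEquiv (hg₀ : h g₀ = ofAdd 1) :
    (degree (ι := ι) h).ker ≃* Amalgam ι h.ker :=
  kerEquivOfMulEquiv (semidirectEquiv h hg₀) (degree h) (degree_comp_fromSemidirect h hg₀)

end Amalgam

/-- If `h : G → ℤ` is surjective with kernel `H`, and
`h' : G × F₂(u,v) → ℤ` agrees with `h` on `G` and sends the free generators `u, v` to `1`,
then `ker h'` is isomorphic to the amalgamated free product `G *_H G`
(two copies of `G` amalgamated along `H` via the identity, realized as the pushout of the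
two copies of the inclusion `H ↪ G`). -/
theorem ker_of_product_with_F2_iso_amalgamated_product
    (G : Type) [Group G] (h : G →* Multiplicative ℤ)
    (hsurj : Function.Surjective h)
    (h' : G × FreeGroup Bool →* Multiplicative ℤ)
    (hh' : h' = (h.comp (MonoidHom.fst G (FreeGroup Bool))) *
      ((FreeGroup.lift fun _ => Multiplicative.ofAdd (1 : ℤ)).comp
        (MonoidHom.snd G (FreeGroup Bool)))) :
    Nonempty (h'.ker ≃* Monoid.PushoutI (fun _ : Bool => h.ker.subtype)) := by
  obtain ⟨g₀, hg₀⟩ := hsurj (ofAdd 1)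
  subst hh'
  exact ⟨Amalgam.kerDegreeEquiv h hg₀⟩
end

section
/- The map from the amalgamated free product G *_H G to G × F₂(u,v) defined by sending g in the left copy of G to g·u^{-h(g)} and g in the right copy to g·v^{-h(g)} (where h : G → Z is a homomorphism with kernel H) is an injective group homomorphism. -/
/-!
Write an element of `G *_H G` in normal form `k g₁ ⋯ gₙ` with `k ∈ H` and letters `gⱼ ∉ H`
taken alternately from the two factors. Its image in `F₂(u,v)` is the alternating product
`u^{-h g₁} v^{-h g₂} ⋯`, whose exponents are nonzero because `H = ker h`; it is therefore
reduced, and trivial only when `n = 0`. In that case the `G`-coordinate of the image is `k`.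
-/

theorem zpowersHom_injective {G : Type*} [Group G] [IsMulTorsionFree G] {a : G} (ha : a ≠ 1) :
    Function.Injective (zpowersHom G a) :=
  (injective_iff_map_eq_one _).2 fun n hn => by simpa [ha] using hn

namespace Monoid.CoprodI.Word

variable {ι : Type*} {G M : ι → Type*} [∀ i, Group (G i)] [∀ i, Group (M i)]

theorem eq_empty_of_lift_prod_eq_one (f : ∀ i, G i →* M i) {w : Word G}
    (hw : ∀ g ∈ w.toList, f g.1 g.2 ≠ 1)
    (h : lift (fun i => of.comp (f i)) w.prod = 1) : w = .empty := by
  classical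
  let w' : Word M :=
    { toList := w.toList.map fun g => ⟨g.1, f g.1 g.2⟩
      ne_one := by
        simp only [List.mem_map]
        rintro _ ⟨g, hg, rfl⟩
        exact hw g hg
      chain_ne := List.isChain_map _ |>.mpr w.chain_ne }
  have hw' : w'.prod = 1 := by
    rw [← h, prod, prod, map_list_prod, List.map_map, List.map_map]
    congr 1
  have : w' = .empty := Word.equiv.symm.injective (hw'.trans prod_empty.symm)
  ext1
  simpa [w'] using congrArg Word.toList this

end Monoid.CoprodI.Word

namespace Monoid.PushoutI

variable {ι : Type*} {G : ι → Type*} {H : Type*} [∀ i, Group (G i)] [Group H] {φ : ∀ i, H →* G i}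

theorem NormalWord.reduced {d : NormalWord.Transversal φ} (w : NormalWord d) :
    Reduced φ w.toWord := by
  rintro ⟨i, g⟩ hg hrange
  have hc := d.compl i
  exact w.ne_one _ hg <| congrArg Subtype.val <|
    (hc.equiv_snd_eq_self_of_mem_of_one_mem (one_mem _) (w.normalized i g hg)).symm.trans
      (hc.equiv_snd_eq_one_of_mem_of_one_mem (d.one_mem i) hrange)

theorem ker_le_range_base [Nonempty ι] (hφ : ∀ i, Function.Injective (φ i))
    {M : ι → Type*} [∀ i, Group (M i)] (f : ∀ i, G i →* M i) (hf : ∀ i, (f i).ker = (φ i).range)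
    (Ψ : PushoutI φ →* CoprodI M) (hΨ : ∀ i, Ψ.comp (of i) = CoprodI.of.comp (f i)) :
    Ψ.ker ≤ (base φ).range := by
  classical
  intro x hx
  obtain ⟨d⟩ := NormalWord.transversal_nonempty φ hφ
  obtain ⟨w, rfl⟩ : ∃ w : NormalWord d, w.prod = x := ⟨_, NormalWord.equiv.symm_apply_apply x⟩
  have hbase : ∀ k, Ψ (base φ k) = 1 := by
    intro k
    obtain ⟨i⟩ := ‹Nonempty ι›
    rw [← of_apply_eq_base φ i, ← MonoidHom.comp_apply, hΨ, MonoidHom.comp_apply,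
      (f i).mem_ker.mp (hf i ▸ ⟨k, rfl⟩), map_one]
  have hcop : Ψ.comp ofCoprodI = CoprodI.lift fun i => CoprodI.of.comp (f i) :=
    CoprodI.ext_hom _ _ fun i => by ext; simp [← hΨ]
  have hw : w.toWord = .empty := by
    refine CoprodI.Word.eq_empty_of_lift_prod_eq_one f
      (fun g hg hfg => w.reduced g hg (hf g.1 ▸ hfg)) ?_
    rw [← hcop]
    simpa [NormalWord.prod, hbase] using hx
  exact ⟨w.head, by simp [NormalWord.prod, hw]⟩

theorem injective_of_injective_comp_base [Nonempty ι] (hφ : ∀ i, Function.Injective (φ i))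
    {M : ι → Type*} [∀ i, Group (M i)] (f : ∀ i, G i →* M i) (hf : ∀ i, (f i).ker = (φ i).range)
    {P : Type*} [Group P] (L : PushoutI φ →* P) (e : P →* CoprodI M)
    (he : ∀ i, (e.comp L).comp (of i) = CoprodI.of.comp (f i))
    (hbase : Function.Injective (L.comp (base φ))) : Function.Injective L := by
  refine (injective_iff_map_eq_one L).2 fun x hx => ?_
  obtain ⟨k, rfl⟩ := ker_le_range_base hφ f hf (e.comp L) he
    (show e (L x) = 1 by rw [hx, map_one])
  rw [hbase (hx.trans (map_one _).symm), map_one]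

end Monoid.PushoutI

/-- The map `G *_H G → G × F₂(u,v)` sending `g` in the left copy of `G` to
`g·u^{-h(g)}` and `g` in the right copy to `g·v^{-h(g)}` (where `h : G → ℤ` is a homomorphism
with kernel `H`, and the amalgamated product is the pushout of the two copies of `H ↪ G`)
is an injective group homomorphism.  Here the left copy is indexed by `false` (with `u` the
free generator `FreeGroup.of false`) and the right copy by `true`; note
`zpowersHom _ ((FreeGroup.of b)⁻¹) (h g) = (FreeGroup.of b)^{-h(g)}`. -/
theorem amalgamated_product_into_product_with_F2_injective
    (G : Type) [Group G] (h : G →* Multiplicative ℤ) :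
    Function.Injective
      (Monoid.PushoutI.lift (φ := fun _ : Bool => h.ker.subtype)
        (fun b => (MonoidHom.id G).prod
          ((zpowersHom (FreeGroup Bool) ((FreeGroup.of b)⁻¹)).comp h))
        ((MonoidHom.inl G (FreeGroup Bool)).comp h.ker.subtype)
        (by
          intro b
          ext x
          · simp
          · have hx : h (x : G) = 1 := x.2
            simp [hx])) := by
  let f : Bool → G →* FreeGroup Unit := fun _ => (zpowersHom _ (FreeGroup.of ())⁻¹).comp h
  have hf : ∀ b, (f b).ker = h.ker.subtype.range := fun b => by
    rw [MonoidHom.ker_comp_of_injective _ _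
      (zpowersHom_injective (inv_ne_one.2 (FreeGroup.of_ne_one _))), Subgroup.range_subtype]
  refine Monoid.PushoutI.injective_of_injective_comp_base (fun _ => h.ker.subtype_injective)
    f hf _ (freeGroupEquivCoprodI.toMonoidHom.comp (MonoidHom.snd G (FreeGroup Bool)))
    (fun b => by ext g; simp [f]) fun k k' hk => ?_
  simpa using hk
end
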